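/- Suppose operators jₙ (n ∈ ℤ) and lₙ (n ∈ ℤ) on a vector space satisfy the Heisenberg relations [jₘ, jₙ] = n δ_{m+n,0}·I, the Virasoro relations with c = 1: [lₘ, lₙ] = (m−n)l_{m+n} + (1/12)m(m²−1)δ_{m+n,0}·I, and the mixed relations [lₘ, jₙ] = −n j_{m+n}. Then for b ∈ ℂ the modified operators l̃ₙ = lₙ − i b (n+1) jₙ satisfy the Virasoro relations with central charge c = 1 − 12b²: [l̃ₘ, l̃ₙ] = (m−n) l̃_{m+n} + ((1−12b²)/12) m(m²−1) δ_{m+n,0}·I. -/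
import Mathlib


/-- Fairlie's construction: if operators `jₙ` satisfy the Heisenberg relations
`[jₘ,jₙ] = n δ_{m+n,0}·I`, operators `lₙ` satisfy the Virasoro relations with
`c = 1`, and `[lₘ,jₙ] = −n j_{m+n}`, then for any `b ∈ ℂ` the modified
operators `l̃ₙ = lₙ − ib(n+1)jₙ` satisfy the Virasoro relations with central
charge `1 − 12b²`. -/
theorem fairlie_construction
    {V : Type*} [AddCommGroup V] [Module ℂ V]
    (j l : ℤ → Module.End ℂ V)
    (hHeis : ∀ m n : ℤ, j m * j n - j n * j m
      = (if m + n = 0 then (n : ℂ) else 0) • (1 : Module.End ℂ V))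
    (hVir : ∀ m n : ℤ, l m * l n - l n * l m
      = ((m - n : ℤ) : ℂ) • l (m + n)
        + (if m + n = 0 then (1 : ℂ) / 12 * (m : ℂ) * ((m : ℂ) ^ 2 - 1) else 0)
            • (1 : Module.End ℂ V))
    (hMixed : ∀ m n : ℤ, l m * j n - j n * l m = (-(n : ℂ)) • j (m + n))
    (b : ℂ) (lt : ℤ → Module.End ℂ V)
    (hlt : ∀ n : ℤ, lt n = l n - (Complex.I * b * ((n : ℂ) + 1)) • j n) :
    ∀ m n : ℤ, lt m * lt n - lt n * lt m
      = ((m - n : ℤ) : ℂ) • lt (m + n)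
        + (if m + n = 0
            then (1 - 12 * b ^ 2) / 12 * (m : ℂ) * ((m : ℂ) ^ 2 - 1) else 0)
            • (1 : Module.End ℂ V) := by
  intro m n
  set am := Complex.I * b * ((m : ℂ) + 1) with ham
  set an := Complex.I * b * ((n : ℂ) + 1) with han
  have h3 : j m * l n - l n * j m = (m : ℂ) • j (m + n) := by
    have := hMixed n m
    rw [← neg_sub (l n * j m), this, neg_smul, neg_neg, add_comm]
  have expand : lt m * lt n - lt n * lt m
      = (l m * l n - l n * l m) - an • (l m * j n - j n * l m)
        - am • (j m * l n - l n * j m) + (am * an) • (j m * j n - j n * j m) := by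
    rw [hlt m, hlt n]
    simp only [mul_sub, sub_mul, smul_mul_assoc, mul_smul_comm, smul_smul, smul_sub]
    module
  rw [expand, hVir m n, hMixed m n, h3, hHeis m n, hlt (m + n)]
  rcases eq_or_ne (m + n) 0 with h | h
  · have hn : n = -m := by omega
    subst hn
    simp only [h, if_pos, ham, han]
    push_cast
    match_scalars <;> ring_nf <;> simp [Complex.I_sq] <;> ring
  · simp only [h, if_neg, ite_false, ham, han]
    push_cast
    match_scalars <;> ring_nf <;> simp [Complex.I_sq] <;> ring
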